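/- The graded commutator of two algebraic graded derivations of Ω(A) is again algebraic; consequently there is a well-defined graded Lie bracket [ , ]^Δ (the algebraic bracket) on Ω¹_*(A) = ⊕_k Hom^A_A(Ω₁(A), Ω_k(A)) determined by j([K,L]^Δ) = [j_K, j_L], and it makes Ω¹_*(A) a graded Lie algebra. -/

import Mathlib

noncomputable section

namespace NCDG

variable (K : Type) [Field K] (A : Type) [Ring A] [Algebra K A]

/-- The defining relations of the algebra `Ω(A)` of universal differential forms:
it is generated by the elements of `A` (first summand) together with symbols `d a`
(second summand), subject to the requirements that `A → Ω(A)` is a unital algebra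
homomorphism, `d` is `K`-linear, and `d` satisfies the Leibniz rule on `A`. -/
inductive Rel : FreeAlgebra K (A ⊕ A) → FreeAlgebra K (A ⊕ A) → Prop
  | add_coe (a b : A) : Rel (FreeAlgebra.ι K (Sum.inl (a + b)))
      (FreeAlgebra.ι K (Sum.inl a) + FreeAlgebra.ι K (Sum.inl b))
  | smul_coe (c : K) (a : A) : Rel (FreeAlgebra.ι K (Sum.inl (c • a)))
      (c • FreeAlgebra.ι K (Sum.inl a))
  | mul_coe (a b : A) : Rel (FreeAlgebra.ι K (Sum.inl (a * b)))
      (FreeAlgebra.ι K (Sum.inl a) * FreeAlgebra.ι K (Sum.inl b))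
  | one_coe : Rel (FreeAlgebra.ι K (Sum.inl 1)) 1
  | add_d (a b : A) : Rel (FreeAlgebra.ι K (Sum.inr (a + b)))
      (FreeAlgebra.ι K (Sum.inr a) + FreeAlgebra.ι K (Sum.inr b))
  | smul_d (c : K) (a : A) : Rel (FreeAlgebra.ι K (Sum.inr (c • a)))
      (c • FreeAlgebra.ι K (Sum.inr a))
  | leibniz (a b : A) : Rel (FreeAlgebra.ι K (Sum.inr (a * b)))
      (FreeAlgebra.ι K (Sum.inr a) * FreeAlgebra.ι K (Sum.inl b) +
        FreeAlgebra.ι K (Sum.inl a) * FreeAlgebra.ι K (Sum.inr b))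

/-- The algebra `Ω(A)` of universal differential forms over `A`. -/
abbrev Omega := RingQuot (Rel K A)

/-- The canonical inclusion `A → Ω(A)` (onto the degree-zero part `Ω₀(A) = A`). -/
def jA (a : A) : Omega K A := RingQuot.mkAlgHom K (Rel K A) (FreeAlgebra.ι K (Sum.inl a))

/-- The universal differential applied to an element of `A`, i.e. `d a ∈ Ω₁(A)`. -/
def dA (a : A) : Omega K A := RingQuot.mkAlgHom K (Rel K A) (FreeAlgebra.ι K (Sum.inr a))

lemma jA_add (a b : A) : jA K A (a + b) = jA K A a + jA K A b := by
  simpa [jA, map_add] using RingQuot.mkAlgHom_rel K (Rel.add_coe (K := K) (A := A) a b)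

lemma jA_smul (c : K) (a : A) : jA K A (c • a) = c • jA K A a := by
  simpa [jA, map_smul] using RingQuot.mkAlgHom_rel K (Rel.smul_coe (K := K) (A := A) c a)

lemma jA_mul (a b : A) : jA K A (a * b) = jA K A a * jA K A b := by
  simpa [jA, map_mul] using RingQuot.mkAlgHom_rel K (Rel.mul_coe (K := K) (A := A) a b)

lemma jA_one : jA K A 1 = 1 := by
  simpa [jA, map_one] using RingQuot.mkAlgHom_rel K (Rel.one_coe (K := K) (A := A))

lemma dA_add (a b : A) : dA K A (a + b) = dA K A a + dA K A b := by
  simpa [dA, map_add] using RingQuot.mkAlgHom_rel K (Rel.add_d (K := K) (A := A) a b)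

lemma dA_smul (c : K) (a : A) : dA K A (c • a) = c • dA K A a := by
  simpa [dA, map_smul] using RingQuot.mkAlgHom_rel K (Rel.smul_d (K := K) (A := A) c a)

lemma dA_leibniz (a b : A) :
    dA K A (a * b) = dA K A a * jA K A b + jA K A a * dA K A b := by
  simpa [jA, dA, map_mul, map_add] using
    RingQuot.mkAlgHom_rel K (Rel.leibniz (K := K) (A := A) a b)

lemma dA_one : dA K A 1 = 0 := by
  have h := dA_leibniz K A 1 1
  simp only [jA_one, mul_one, one_mul] at h
  exact (left_eq_add.mp h)

/-- The space `Ωₙ(A)` of `n`-forms: the linear span of the monomials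
`a₀ ⬝ d a₁ ⬝ ⋯ ⬝ d aₙ`. -/
def OmegaDeg (n : ℕ) : Submodule K (Omega K A) :=
  Submodule.span K
    {x | ∃ (a : A) (l : List A), l.length = n ∧ x = jA K A a * (l.map (dA K A)).prod}

/-- The spaces `Ωₙ(A)` indexed by the integers (zero in negative degrees). -/
def OmegaDegZ (n : ℤ) : Submodule K (Omega K A) :=
  if 0 ≤ n then OmegaDeg K A n.toNat else ⊥

open Matrix in
/-- Auxiliary algebra homomorphism used to construct the universal differential `d`
on `Ω(A)`: `x ↦ !![σ x, d x; 0, x]` on generators, where `σ` is the parity involution. -/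
def PhiFree : FreeAlgebra K (A ⊕ A) →ₐ[K] Matrix (Fin 2) (Fin 2) (Omega K A) :=
  FreeAlgebra.lift K (Sum.elim
    (fun a => !![jA K A a, dA K A a; 0, jA K A a])
    (fun a => !![-(dA K A a), 0; 0, dA K A a]))

private lemma leib_matrix {R : Type} [Ring R] (ja da jb db dab : R)
    (h : dab = da * jb + ja * db) :
    !![-dab, 0; 0, dab] =
      !![-da, 0; 0, da] * !![jb, db; 0, jb] + !![ja, da; 0, ja] * !![-db, 0; 0, db] := by
  subst h
  rw [Matrix.mul_fin_two, Matrix.mul_fin_two]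
  ext i j
  fin_cases i <;> fin_cases j <;> simp <;> abel

lemma phiFree_rel : ∀ ⦃x y : FreeAlgebra K (A ⊕ A)⦄, Rel K A x y →
    PhiFree K A x = PhiFree K A y := by
  rintro x y h
  cases h with
  | leibniz a b =>
      simp only [PhiFree, map_mul, map_add, FreeAlgebra.lift_ι_apply, Sum.elim_inl,
        Sum.elim_inr]
      exact leib_matrix _ _ _ _ _ (dA_leibniz K A a b)
  | mul_coe a b =>
      simp only [PhiFree, map_mul, FreeAlgebra.lift_ι_apply, Sum.elim_inl]
      rw [Matrix.mul_fin_two]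
      ext i j
      fin_cases i <;> fin_cases j <;>
        simp [jA_mul, dA_leibniz] <;> abel
  | add_coe a b =>
      ext i j
      fin_cases i <;> fin_cases j <;>
        simp [PhiFree, FreeAlgebra.lift_ι_apply, map_add, jA_add, dA_add]
  | smul_coe c a =>
      ext i j
      fin_cases i <;> fin_cases j <;>
        simp [PhiFree, FreeAlgebra.lift_ι_apply, map_smul, jA_smul, dA_smul]
  | one_coe =>
      ext i j
      fin_cases i <;> fin_cases j <;>
        simp [PhiFree, FreeAlgebra.lift_ι_apply, map_one, jA_one, dA_one, Matrix.one_apply]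
  | add_d a b =>
      ext i j
      fin_cases i <;> fin_cases j <;>
        simp [PhiFree, FreeAlgebra.lift_ι_apply, map_add, dA_add] <;> abel
  | smul_d c a =>
      ext i j
      fin_cases i <;> fin_cases j <;>
        simp [PhiFree, FreeAlgebra.lift_ι_apply, map_smul, dA_smul]

/-- The homomorphism `Ω(A) → M₂(Ω(A))`, `x ↦ !![σ x, d x; 0, x]`, defining the
universal differential. -/
def Phi : Omega K A →ₐ[K] Matrix (Fin 2) (Fin 2) (Omega K A) :=
  RingQuot.liftAlgHom K ⟨PhiFree K A, phiFree_rel K A⟩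

/-- The universal differential `d : Ω(A) → Ω(A)`. -/
def dOm : Omega K A →ₗ[K] Omega K A where
  toFun x := Phi K A x 0 1
  map_add' x y := by simp [map_add]
  map_smul' c x := by simp [map_smul]


/-- The graded commutator `[D₁, D₂] = D₁ ∘ D₂ - (-1)^{k₁ k₂} D₂ ∘ D₁` of two (degree
`k₁` resp. `k₂`) operators on `Ω(A)`. -/
def gcomm (k₁ k₂ : ℤ) (D₁ D₂ : Omega K A →ₗ[K] Omega K A) :
    Omega K A →ₗ[K] Omega K A :=
  D₁ ∘ₗ D₂ - ((-1 : K) ^ (k₁ * k₂)) • (D₂ ∘ₗ D₁)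

/-- A graded derivation of degree `k` of `Ω(A)`: it raises degrees by `k` and satisfies
the graded Leibniz rule. -/
def IsGDer (k : ℤ) (D : Omega K A →ₗ[K] Omega K A) : Prop :=
  (∀ n : ℤ, ∀ x ∈ OmegaDegZ K A n, D x ∈ OmegaDegZ K A (k + n)) ∧
  (∀ (n : ℤ) (x y : Omega K A), x ∈ OmegaDegZ K A n →
    D (x * y) = D x * y + ((-1 : K) ^ (k * n)) • (x * D y))

/-- A derivation is algebraic if it vanishes on `Ω₀(A) = A`. -/
def IsAlgebraic (D : Omega K A →ₗ[K] Omega K A) : Prop :=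
  ∀ x ∈ OmegaDegZ K A 0, D x = 0

/-- `f` represents an element of `Ω¹_k(A) = Hom^A_A(Ω₁(A), Ω_k(A))`: an `A`-bimodule
homomorphism `Ω₁(A) → Ω_k(A)`, extended by zero to the other homogeneous components. -/
def IsOneFormValued (k : ℤ) (f : Omega K A →ₗ[K] Omega K A) : Prop :=
  (∀ n : ℤ, n ≠ 1 → ∀ ω ∈ OmegaDegZ K A n, f ω = 0) ∧
  (∀ ω ∈ OmegaDegZ K A 1, f ω ∈ OmegaDegZ K A k) ∧
  (∀ (a : A), ∀ ω ∈ OmegaDegZ K A 1,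
    f (jA K A a * ω) = jA K A a * f ω ∧ f (ω * jA K A a) = f ω * jA K A a)

/-- `JPair k f D` means: `f ∈ Ω¹_k(A)` and `D = j_f` is the associated algebraic graded
derivation of degree `k - 1` (the unique algebraic derivation restricting to `f` on
`Ω₁(A)`). -/
def JPair (k : ℤ) (f D : Omega K A →ₗ[K] Omega K A) : Prop :=
  IsOneFormValued K A k f ∧ IsGDer K A (k - 1) D ∧ IsAlgebraic K A D ∧
  ∀ ω ∈ OmegaDegZ K A 1, D ω = f ω

/-- `LPair k f D` means: `f ∈ Ω¹_k(A)` and `D = 𝓛_f = [j_f, d]` is the associated Lie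
derivative along `f`, a graded derivation of degree `k`. -/
def LPair (k : ℤ) (f D : Omega K A →ₗ[K] Omega K A) : Prop :=
  ∃ Df, JPair K A k f Df ∧ D = gcomm K A (k - 1) 1 Df (dOm K A)

/-- `FNB k l f g h` means: `f ∈ Ω¹_k(A)`, `g ∈ Ω¹_l(A)` and `h = [f, g] ∈ Ω¹_{k+l}(A)`
is their abstract Frölicher–Nijenhuis bracket, i.e. `𝓛_h = [𝓛_f, 𝓛_g]`. -/
def FNB (k l : ℤ) (f g h : Omega K A →ₗ[K] Omega K A) : Prop :=
  ∃ Lf Lg Lh, LPair K A k f Lf ∧ LPair K A l g Lg ∧ LPair K A (k + l) h Lh ∧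
    Lh = gcomm K A k l Lf Lg

/-! ### Auxiliary material for statement 11 -/

section Aux

lemma neg_one_ne_zero'' : (-1 : K) ≠ 0 := by norm_num

lemma zpow_neg_one_sq (m : ℤ) : ((-1 : K) ^ m) * ((-1 : K) ^ m) = 1 := by
  rw [← mul_zpow]; norm_num

lemma omegaDegZ_natCast (n : ℕ) : OmegaDegZ K A (n : ℤ) = OmegaDeg K A n := by
  simp [OmegaDegZ]

lemma omegaDegZ_zero : OmegaDegZ K A 0 = OmegaDeg K A 0 := by
  simpa using omegaDegZ_natCast K A 0

lemma omegaDegZ_one : OmegaDegZ K A 1 = OmegaDeg K A 1 := by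
  simpa using omegaDegZ_natCast K A 1

lemma mon_mem (a : A) (l : List A) :
    jA K A a * (l.map (dA K A)).prod ∈ OmegaDeg K A l.length :=
  Submodule.subset_span ⟨a, l, rfl, rfl⟩

lemma one_mem_deg0 : (1 : Omega K A) ∈ OmegaDeg K A 0 := by
  simpa [jA_one] using mon_mem K A 1 []

lemma jA_mem (a : A) : jA K A a ∈ OmegaDeg K A 0 := by
  simpa using mon_mem K A a []

lemma dA_mul_jA (b a : A) :
    dA K A b * jA K A a = dA K A (b * a) - jA K A b * dA K A a := by
  rw [dA_leibniz]; abel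

lemma mul_jA_left {n : ℕ} (b : A) {x : Omega K A} (hx : x ∈ OmegaDeg K A n) :
    jA K A b * x ∈ OmegaDeg K A n := by
  induction hx using Submodule.span_induction with
  | mem x h =>
      obtain ⟨a, l, hl, rfl⟩ := h
      rw [← mul_assoc, ← jA_mul]
      exact hl ▸ mon_mem K A _ l
  | zero => simpa using Submodule.zero_mem _
  | add x y hx hy ihx ihy => rw [mul_add]; exact add_mem ihx ihy
  | smul c x hx ih => rw [mul_smul_comm]; exact Submodule.smul_mem _ _ ih

lemma mul_dA_left {n : ℕ} (b : A) {x : Omega K A} (hx : x ∈ OmegaDeg K A n) :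
    dA K A b * x ∈ OmegaDeg K A (n + 1) := by
  induction hx using Submodule.span_induction with
  | mem x h =>
      obtain ⟨a, l, hl, rfl⟩ := h
      have e : dA K A b * (jA K A a * (l.map (dA K A)).prod)
          = jA K A 1 * ((List.map (dA K A) ((b * a) :: l)).prod)
            - jA K A b * ((List.map (dA K A) (a :: l)).prod) := by
        rw [jA_one, one_mul, List.map_cons, List.prod_cons, List.map_cons, List.prod_cons,
          ← mul_assoc, ← mul_assoc, dA_mul_jA, sub_mul]
      rw [e]
      refine sub_mem ?_ ?_
      · have := mon_mem K A 1 ((b * a) :: l)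
        simpa [hl] using this
      · have := mon_mem K A b (a :: l)
        simpa [hl] using this
  | zero => simpa using Submodule.zero_mem _
  | add x y hx hy ihx ihy => rw [mul_add]; exact add_mem ihx ihy
  | smul c x hx ih => rw [mul_smul_comm]; exact Submodule.smul_mem _ _ ih

lemma mul_jA_right {x : Omega K A} (hx : x ∈ OmegaDeg K A 1) (b : A) :
    x * jA K A b ∈ OmegaDeg K A 1 := by
  induction hx using Submodule.span_induction with
  | mem x h =>
      obtain ⟨a, l, hl, rfl⟩ := h
      obtain ⟨c, rfl⟩ := List.length_eq_one_iff.mp hl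
      have e : jA K A a * (List.map (dA K A) [c]).prod * jA K A b
          = jA K A a * (List.map (dA K A) [c * b]).prod
            - jA K A (a * c) * (List.map (dA K A) [b]).prod := by
        simp only [List.map_cons, List.map_nil, List.prod_cons, List.prod_nil, mul_one]
        rw [mul_assoc, dA_mul_jA, jA_mul, mul_sub, mul_assoc]
      rw [e]
      exact sub_mem (mon_mem K A a [c * b]) (mon_mem K A (a * c) [b])
  | zero => simpa using Submodule.zero_mem _
  | add x y hx hy ihx ihy => rw [add_mul]; exact add_mem ihx ihy
  | smul c x hx ih => rw [smul_mul_assoc]; exact Submodule.smul_mem _ _ ih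

lemma iSup_omegaDeg_eq_top : (⨆ n : ℕ, OmegaDeg K A n) = ⊤ := by
  set S := ⨆ n : ℕ, OmegaDeg K A n with hS
  have hle : ∀ n : ℕ, OmegaDeg K A n ≤ S := fun n => le_iSup _ n
  have hjA : ∀ (b : A) {z : Omega K A}, z ∈ S → jA K A b * z ∈ S := by
    intro b z hz
    refine Submodule.iSup_induction (motive := fun w => jA K A b * w ∈ S) _ hz
      (fun n x hx => hle n (mul_jA_left K A b hx)) (by simp) (fun x y hx hy => ?_)
    simp only [mul_add]; exact add_mem hx hy
  have hdA : ∀ (b : A) {z : Omega K A}, z ∈ S → dA K A b * z ∈ S := by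
    intro b z hz
    refine Submodule.iSup_induction (motive := fun w => dA K A b * w ∈ S) _ hz
      (fun n x hx => hle (n + 1) (mul_dA_left K A b hx)) (by simp) (fun x y hx hy => ?_)
    simp only [mul_add]; exact add_mem hx hy
  have hmain : ∀ y : FreeAlgebra K (A ⊕ A), ∀ z ∈ S,
      RingQuot.mkAlgHom K (Rel K A) y * z ∈ S := by
    intro y
    refine FreeAlgebra.induction K (A ⊕ A)
      (motive := fun y => ∀ z ∈ S, RingQuot.mkAlgHom K (Rel K A) y * z ∈ S)
      ?_ ?_ ?_ ?_ y
    · intro r z hz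
      rw [AlgHom.commutes, ← Algebra.smul_def]
      exact Submodule.smul_mem _ _ hz
    · rintro (a | a) z hz
      · exact hjA a hz
      · exact hdA a hz
    · intro p q hp hq z hz
      rw [map_mul, mul_assoc]
      exact hp _ (hq _ hz)
    · intro p q hp hq z hz
      rw [map_add, add_mul]
      exact add_mem (hp _ hz) (hq _ hz)
  rw [eq_top_iff]
  intro x _
  obtain ⟨y, rfl⟩ := RingQuot.mkAlgHom_surjective K (Rel K A) x
  simpa using hmain y 1 (hle 0 (one_mem_deg0 K A))

lemma omega_ext {h₁ h₂ : Omega K A →ₗ[K] Omega K A}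
    (H : ∀ n : ℤ, ∀ x ∈ OmegaDegZ K A n, h₁ x = h₂ x) : h₁ = h₂ := by
  ext x
  have hx : x ∈ (⨆ n : ℕ, OmegaDeg K A n) := by
    rw [iSup_omegaDeg_eq_top]; trivial
  refine Submodule.iSup_induction (motive := fun w => h₁ w = h₂ w) _ hx (fun n y hy => ?_)
    (by simp) (fun a b ha hb => by simp only [map_add]; rw [ha, hb])
  exact H n y ((omegaDegZ_natCast K A n).symm ▸ hy)

lemma gcomm_algebraic {k₁ k₂ : ℤ} {D₁ D₂ : Omega K A →ₗ[K] Omega K A}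
    (a₁ : IsAlgebraic K A D₁) (a₂ : IsAlgebraic K A D₂) :
    IsAlgebraic K A (gcomm K A k₁ k₂ D₁ D₂) := by
  intro x hx
  simp [gcomm, a₁ x hx, a₂ x hx]

open Polynomial in
/-- Auxiliary grading homomorphism `Ω(A) → Ω(A)[t]`, `jA a ↦ jA a`, `dA a ↦ (dA a)·t`. -/
def GammaFree : FreeAlgebra K (A ⊕ A) →ₐ[K] Polynomial (Omega K A) :=
  FreeAlgebra.lift K (Sum.elim (fun a => Polynomial.C (jA K A a))
    (fun a => Polynomial.C (dA K A a) * Polynomial.X))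

open Polynomial in
lemma gammaFree_rel : ∀ ⦃x y : FreeAlgebra K (A ⊕ A)⦄, Rel K A x y →
    GammaFree K A x = GammaFree K A y := by
  rintro x y h
  cases h with
  | add_coe a b => simp [GammaFree, jA_add]
  | smul_coe c a => simp [GammaFree, jA_smul, Polynomial.smul_C]
  | mul_coe a b => simp [GammaFree, jA_mul]
  | one_coe => simp [GammaFree, jA_one]
  | add_d a b => simp [GammaFree, dA_add, add_mul]
  | smul_d c a =>
      simp only [GammaFree, map_smul, FreeAlgebra.lift_ι_apply, Sum.elim_inr, dA_smul,
        ← Polynomial.smul_C, smul_mul_assoc]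
  | leibniz a b =>
      simp only [GammaFree, map_mul, map_add, FreeAlgebra.lift_ι_apply, Sum.elim_inl,
        Sum.elim_inr, dA_leibniz, map_add, map_mul]
      rw [add_mul, mul_assoc (C (dA K A a)) X, X_mul_C, mul_assoc (C (jA K A a)),
        mul_assoc (C (dA K A a)) (C (jA K A b)) X]

/-- The grading homomorphism on `Ω(A)`. -/
def Gamma : Omega K A →ₐ[K] Polynomial (Omega K A) :=
  RingQuot.liftAlgHom K ⟨GammaFree K A, gammaFree_rel K A⟩

lemma Gamma_jA (a : A) : Gamma K A (jA K A a) = Polynomial.C (jA K A a) := by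
  simp [Gamma, jA, RingQuot.liftAlgHom_mkAlgHom_apply, GammaFree]

lemma Gamma_dA (a : A) :
    Gamma K A (dA K A a) = Polynomial.C (dA K A a) * Polynomial.X := by
  simp [Gamma, dA, RingQuot.liftAlgHom_mkAlgHom_apply, GammaFree]

open Polynomial in
lemma Gamma_mon (a : A) (l : List A) :
    Gamma K A (jA K A a * (l.map (dA K A)).prod)
      = Polynomial.C (jA K A a * (l.map (dA K A)).prod) * Polynomial.X ^ l.length := by
  have hl : ∀ l : List A, Gamma K A ((l.map (dA K A)).prod)
      = Polynomial.C ((l.map (dA K A)).prod) * Polynomial.X ^ l.length := by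
    intro l
    induction l with
    | nil => simp
    | cons c t ih =>
        simp only [List.map_cons, List.prod_cons, map_mul, Gamma_dA, ih, List.length_cons]
        rw [mul_assoc (C (dA K A c)) X, ← mul_assoc X, X_mul_C,
          mul_assoc (C ((List.map (dA K A) t).prod)) X, ← pow_succ', ← mul_assoc]
  rw [map_mul, Gamma_jA, hl, ← mul_assoc, ← map_mul]

/-- The projection of `Ω(A)` onto the degree-one component `Ω₁(A)`. -/
def Pone : Omega K A →ₗ[K] Omega K A where
  toFun x := (Gamma K A x).coeff 1
  map_add' x y := by simp
  map_smul' c x := by simp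

lemma Pone_eq_self {x : Omega K A} (hx : x ∈ OmegaDeg K A 1) : Pone K A x = x := by
  induction hx using Submodule.span_induction with
  | mem x h =>
      obtain ⟨a, l, hl, rfl⟩ := h
      have e : Pone K A (jA K A a * (l.map (dA K A)).prod)
          = (Polynomial.C (jA K A a * (l.map (dA K A)).prod)
              * Polynomial.X ^ l.length).coeff 1 := by
        simp only [Pone, LinearMap.coe_mk, AddHom.coe_mk, Gamma_mon]
      rw [e, Polynomial.coeff_C_mul, Polynomial.coeff_X_pow, hl, if_pos rfl, mul_one]
  | zero => simp
  | add x y hx hy ihx ihy => rw [map_add, ihx, ihy]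
  | smul c x hx ih => rw [map_smul, ih]

lemma Pone_eq_zero {n : ℕ} (hn : n ≠ 1) {x : Omega K A} (hx : x ∈ OmegaDeg K A n) :
    Pone K A x = 0 := by
  induction hx using Submodule.span_induction with
  | mem x h =>
      obtain ⟨a, l, hl, rfl⟩ := h
      have e : Pone K A (jA K A a * (l.map (dA K A)).prod)
          = (Polynomial.C (jA K A a * (l.map (dA K A)).prod)
              * Polynomial.X ^ l.length).coeff 1 := by
        simp only [Pone, LinearMap.coe_mk, AddHom.coe_mk, Gamma_mon]
      rw [e, Polynomial.coeff_C_mul, Polynomial.coeff_X_pow, hl, if_neg (Ne.symm hn), mul_zero]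
  | zero => simp
  | add x y hx hy ihx ihy => rw [map_add, ihx, ihy, add_zero]
  | smul c x hx ih => rw [map_smul, ih, smul_zero]

lemma isGDer_gcomm {k₁ k₂ : ℤ} {D₁ D₂ : Omega K A →ₗ[K] Omega K A}
    (h₁ : IsGDer K A k₁ D₁) (h₂ : IsGDer K A k₂ D₂) :
    IsGDer K A (k₁ + k₂) (gcomm K A k₁ k₂ D₁ D₂) := by
  have hne : (-1 : K) ≠ 0 := by norm_num
  constructor
  · intro n x hx
    have m1 : D₁ (D₂ x) ∈ OmegaDegZ K A (k₁ + (k₂ + n)) := h₁.1 _ _ (h₂.1 n x hx)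
    have m2 : D₂ (D₁ x) ∈ OmegaDegZ K A (k₂ + (k₁ + n)) := h₂.1 _ _ (h₁.1 n x hx)
    have e1 : k₁ + (k₂ + n) = k₁ + k₂ + n := by ring
    have e2 : k₂ + (k₁ + n) = k₁ + k₂ + n := by ring
    rw [e1] at m1; rw [e2] at m2
    simpa [gcomm] using sub_mem m1 (Submodule.smul_mem _ _ m2)
  · intro n x y hx
    have q2 := h₂.2 n x y hx
    have q1 := h₁.2 n x y hx
    have r1 := h₁.2 (k₂ + n) (D₂ x) y (h₂.1 n x hx)
    have r2 := h₂.2 (k₁ + n) (D₁ x) y (h₁.1 n x hx)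
    have r3 := h₁.2 n x (D₂ y) hx
    have r4 := h₂.2 n x (D₁ y) hx
    simp only [gcomm, LinearMap.sub_apply, LinearMap.smul_apply, LinearMap.comp_apply]
    rw [q2, q1, map_add, map_add, map_smul, map_smul, r1, r2, r3, r4]
    have E1 : ((-1 : K)) ^ (k₁ * (k₂ + n))
        = (-1 : K) ^ (k₁ * k₂) * (-1 : K) ^ (k₁ * n) := by
      rw [← zpow_add₀ hne]; congr 1; ring
    have E2 : ((-1 : K)) ^ (k₂ * (k₁ + n))
        = (-1 : K) ^ (k₁ * k₂) * (-1 : K) ^ (k₂ * n) := by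
      rw [← zpow_add₀ hne]; congr 1; ring
    have E3 : ((-1 : K)) ^ ((k₁ + k₂) * n)
        = (-1 : K) ^ (k₁ * n) * (-1 : K) ^ (k₂ * n) := by
      rw [← zpow_add₀ hne]; congr 1; ring
    rw [E1, E2, E3]
    have haa := zpow_neg_one_sq K (k₁ * k₂)
    simp only [sub_mul, mul_sub, smul_mul_assoc, mul_smul_comm]
    match_scalars
    all_goals try ring
    linear_combination (-((-1 : K) ^ (k₂ * n))) * zpow_neg_one_sq K (k₂ * k₁)

lemma jpair_construct {m : ℤ} {D : Omega K A →ₗ[K] Omega K A}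
    (hder : IsGDer K A (m - 1) D) (halg : IsAlgebraic K A D) :
    JPair K A m (D ∘ₗ Pone K A) D := by
  have hone : ∀ ω ∈ OmegaDegZ K A 1, (D ∘ₗ Pone K A) ω = D ω := by
    intro ω hω
    rw [omegaDegZ_one] at hω
    simp [Pone_eq_self K A hω]
  refine ⟨⟨?_, ?_, ?_⟩, hder, halg, fun ω hω => (hone ω hω).symm⟩
  · intro n hn ω hω
    rcases le_or_gt 0 n with h0 | h0
    · have hm : ω ∈ OmegaDeg K A n.toNat := by rwa [OmegaDegZ, if_pos h0] at hω
      have ht : n.toNat ≠ 1 := by omega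
      simp [LinearMap.comp_apply, Pone_eq_zero K A ht hm]
    · have hb : OmegaDegZ K A n = ⊥ := by rw [OmegaDegZ, if_neg (not_le.mpr h0)]
      rw [hb, Submodule.mem_bot] at hω
      simp [hω]
  · intro ω hω
    rw [hone ω hω]
    have hm := hder.1 1 ω hω
    have e : m - 1 + 1 = m := by ring
    rwa [e] at hm
  · intro a ω hω
    have haj : jA K A a ∈ OmegaDegZ K A 0 := by
      rw [omegaDegZ_zero]; exact jA_mem K A a
    have h1 : jA K A a * ω ∈ OmegaDegZ K A 1 := by
      rw [omegaDegZ_one] at hω ⊢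
      exact mul_jA_left K A a hω
    have h2 : ω * jA K A a ∈ OmegaDegZ K A 1 := by
      rw [omegaDegZ_one] at hω ⊢
      exact mul_jA_right K A hω a
    constructor
    · rw [hone _ h1, hone _ hω, hder.2 0 (jA K A a) ω haj, halg _ haj]
      simp
    · rw [hone _ h2, hone _ hω, hder.2 1 ω (jA K A a) hω, halg _ haj]
      simp

lemma jpair_unique {m m' : ℤ} {h h' D : Omega K A →ₗ[K] Omega K A}
    (H : JPair K A m h D) (H' : JPair K A m' h' D) : h = h' := by
  refine omega_ext K A fun n x hx => ?_
  by_cases hn : n = 1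
  · subst hn
    rw [← H.2.2.2 x hx, ← H'.2.2.2 x hx]
  · rw [H.1.1 n hn x hx, H'.1.1 n hn x hx]

end Aux

/-- The graded commutator of two algebraic graded derivations of
`Ω(A)` is again algebraic; consequently there is a well-defined graded Lie bracket
`[ , ]^Δ` (the algebraic bracket) on `Ω¹_*(A) = ⊕ₖ Hom^A_A(Ω₁(A), Ω_k(A))` determined by
`j([f,g]^Δ) = [j_f, j_g]`, and it makes `Ω¹_*(A)` a graded Lie algebra. -/
theorem statement11 (K : Type) [Field K] [CharZero K] (A : Type) [Ring A] [Algebra K A] :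
    (∀ (k₁ k₂ : ℤ) (D₁ D₂ : Omega K A →ₗ[K] Omega K A),
      IsGDer K A k₁ D₁ → IsAlgebraic K A D₁ → IsGDer K A k₂ D₂ → IsAlgebraic K A D₂ →
      IsAlgebraic K A (gcomm K A k₁ k₂ D₁ D₂)) ∧
    (∀ (k l : ℤ) (f g Df Dg : Omega K A →ₗ[K] Omega K A),
      JPair K A k f Df → JPair K A l g Dg →
      ∃! h : Omega K A →ₗ[K] Omega K A,
        JPair K A (k + l - 1) h (gcomm K A (k - 1) (l - 1) Df Dg)) ∧
    (∀ (k l : ℤ) (f g Df Dg h h' : Omega K A →ₗ[K] Omega K A),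
      JPair K A k f Df → JPair K A l g Dg →
      JPair K A (k + l - 1) h (gcomm K A (k - 1) (l - 1) Df Dg) →
      JPair K A (k + l - 1) h' (gcomm K A (l - 1) (k - 1) Dg Df) →
      h' = -(((-1 : K) ^ ((k - 1) * (l - 1))) • h)) ∧
    (∀ (k₁ k₂ k₃ : ℤ) (f₁ f₂ f₃ D₁ D₂ D₃ h1_23 h12_3 h2_13 : Omega K A →ₗ[K] Omega K A),
      JPair K A k₁ f₁ D₁ → JPair K A k₂ f₂ D₂ → JPair K A k₃ f₃ D₃ →
      JPair K A (k₁ + (k₂ + k₃ - 1) - 1) h1_23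
        (gcomm K A (k₁ - 1) (k₂ + k₃ - 2) D₁ (gcomm K A (k₂ - 1) (k₃ - 1) D₂ D₃)) →
      JPair K A ((k₁ + k₂ - 1) + k₃ - 1) h12_3
        (gcomm K A (k₁ + k₂ - 2) (k₃ - 1) (gcomm K A (k₁ - 1) (k₂ - 1) D₁ D₂) D₃) →
      JPair K A (k₂ + (k₁ + k₃ - 1) - 1) h2_13
        (gcomm K A (k₂ - 1) (k₁ + k₃ - 2) D₂ (gcomm K A (k₁ - 1) (k₃ - 1) D₁ D₃)) →
      h1_23 = h12_3 + ((-1 : K) ^ ((k₁ - 1) * (k₂ - 1))) • h2_13) := by 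
  have hne : (-1 : K) ≠ 0 := by norm_num
  refine ⟨?_, ?_, ?_, ?_⟩
  · intro k₁ k₂ D₁ D₂ _ a₁ _ a₂
    exact gcomm_algebraic K A a₁ a₂
  · intro k l f g Df Dg hf hg
    have hder : IsGDer K A (k + l - 1 - 1) (gcomm K A (k - 1) (l - 1) Df Dg) := by
      have h0 := isGDer_gcomm K A hf.2.1 hg.2.1
      have e : (k - 1) + (l - 1) = k + l - 1 - 1 := by ring
      rwa [e] at h0
    have halg : IsAlgebraic K A (gcomm K A (k - 1) (l - 1) Df Dg) :=
      gcomm_algebraic K A hf.2.2.1 hg.2.2.1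
    exact ⟨_, jpair_construct K A hder halg, fun h' H' =>
      jpair_unique K A H' (jpair_construct K A hder halg)⟩
  · intro k l f g Df Dg h h' hf hg Hh Hh'
    refine omega_ext K A fun n x hx => ?_
    by_cases hn : n = 1
    · subst hn
      rw [← Hh'.2.2.2 x hx]
      simp only [LinearMap.neg_apply, LinearMap.smul_apply]
      rw [← Hh.2.2.2 x hx]
      simp only [gcomm, LinearMap.sub_apply, LinearMap.smul_apply, LinearMap.comp_apply]
      have E : ((-1 : K)) ^ ((l - 1) * (k - 1)) = ((-1 : K)) ^ ((k - 1) * (l - 1)) := by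
        rw [mul_comm]
      rw [E, smul_sub, smul_smul, zpow_neg_one_sq, one_smul, neg_sub]
    · rw [Hh'.1.1 n hn x hx]
      simp [LinearMap.neg_apply, LinearMap.smul_apply, Hh.1.1 n hn x hx]
  · intro k₁ k₂ k₃ f₁ f₂ f₃ D₁ D₂ D₃ h1 h2 h3 H₁ H₂ H₃ Hh1 Hh2 Hh3
    refine omega_ext K A fun n x hx => ?_
    by_cases hn : n = 1
    · subst hn
      rw [← Hh1.2.2.2 x hx]
      simp only [LinearMap.add_apply, LinearMap.smul_apply]
      rw [← Hh2.2.2.2 x hx, ← Hh3.2.2.2 x hx]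
      simp only [gcomm, LinearMap.sub_apply, LinearMap.smul_apply, LinearMap.comp_apply,
        map_sub, map_smul]
      have E1 : ((-1 : K)) ^ ((k₁ - 1) * (k₂ + k₃ - 2))
          = (-1 : K) ^ ((k₁ - 1) * (k₂ - 1)) * (-1 : K) ^ ((k₁ - 1) * (k₃ - 1)) := by
        rw [← zpow_add₀ hne]; congr 1; ring
      have E2 : ((-1 : K)) ^ ((k₁ + k₂ - 2) * (k₃ - 1))
          = (-1 : K) ^ ((k₁ - 1) * (k₃ - 1)) * (-1 : K) ^ ((k₂ - 1) * (k₃ - 1)) := by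
        rw [← zpow_add₀ hne]; congr 1; ring
      have E3 : ((-1 : K)) ^ ((k₂ - 1) * (k₁ + k₃ - 2))
          = (-1 : K) ^ ((k₁ - 1) * (k₂ - 1)) * (-1 : K) ^ ((k₂ - 1) * (k₃ - 1)) := by
        rw [← zpow_add₀ hne]; congr 1; ring
      rw [E1, E2, E3]
      match_scalars
      all_goals try ring
      · simp only [sq, zpow_neg_one_sq, mul_one, one_mul, neg_add_cancel]
      · simp only [sq, zpow_neg_one_sq, mul_one, one_mul, neg_add_cancel]
    · rw [Hh1.1.1 n hn x hx]
      simp [Hh2.1.1 n hn x hx, Hh3.1.1 n hn x hx]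


end NCDG
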